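/- arXiv:2508.18952 — 7 statements merged into one kernel-verified Lean document; each statement's English description precedes it below -/
import Mathlib

section
/- Let R be a local principal ideal ring of length two with residue field k, and let A ∈ GL_n(R) be such that the reduction Ā ∈ GL_n(k) has irreducible characteristic polynomial. Then the null ideal N_A = {F ∈ R[t] : F(A) = 0} is a principal ideal of R[t], generated by the characteristic polynomial of A. -/
open Polynomial IsLocalRing Matrix
set_option maxHeartbeats 1000000

lemma aux_aeval_matrix_map {R S : Type*} [CommRing R] [CommRing S] (f : R →+* S) {n : ℕ}
    (A : Matrix (Fin n) (Fin n) R) (F : R[X]) :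
    (Polynomial.aeval (A.map f)) (F.map f) = (Polynomial.aeval A F).map f := by
  rw [aeval_def, aeval_def, eval₂_map, ← RingHom.mapMatrix_apply, ← RingHom.mapMatrix_apply,
    hom_eval₂]
  congr 1
  ext x : 1
  simp [Matrix.algebraMap_eq_diagonal, Matrix.diagonal_map]

lemma aux_coeff_mem {R : Type*} [CommRing R] [IsLocalRing R] (p : R[X])
    (h : p.map (residue R) = 0) (π : R) (hπ : maximalIdeal R = Ideal.span {π}) :
    ∃ s : R[X], p = Polynomial.C π * s := by
  have hmem : p ∈ Ideal.map (Polynomial.C : R →+* R[X]) (maximalIdeal R) := by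
    rw [Ideal.mem_map_C_iff]
    intro k
    rw [← residue_eq_zero_iff, ← Polynomial.coeff_map, h, Polynomial.coeff_zero]
  rw [hπ, Ideal.map_span, Set.image_singleton] at hmem
  obtain ⟨s, hs⟩ := Ideal.mem_span_singleton.mp hmem
  exact ⟨s, hs⟩

/-- Let `R` be a local principal ideal ring of length two and `A ∈ GL_n(R)` such that the
reduction `Ā ∈ GL_n(k)` has irreducible characteristic polynomial.  Then the null ideal
`N_A = {F ∈ R[t] : F(A) = 0}` is the principal ideal generated by the characteristic
polynomial of `A`. -/
theorem null_ideal_eq_span_charpoly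
    (R : Type*) [CommRing R] [IsLocalRing R]
    (hprin : (maximalIdeal R).IsPrincipal)
    (hm2 : (maximalIdeal R) ^ 2 = ⊥)
    (n : ℕ) (A : Matrix (Fin n) (Fin n) R) (hA : IsUnit A)
    (hirr : Irreducible (Matrix.charpoly (A.map (residue R)))) :
    ∀ F : Polynomial R, (Polynomial.aeval A) F = 0 ↔ F ∈ Ideal.span {A.charpoly} := by
  rcases Nat.eq_zero_or_pos n with rfl | hn
  · exact absurd (by simp [Matrix.charpoly]) hirr.not_isUnit
  haveI : NeZero n := ⟨hn.ne'⟩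
  set Abar := A.map (residue R) with hAbar
  set χ := A.charpoly with hχ
  have hmono : χ.Monic := A.charpoly_monic
  have hminp : minpoly (ResidueField R) Abar = Abar.charpoly :=
    (minpoly.eq_of_irreducible_of_monic hirr Abar.aeval_self_charpoly
      Abar.charpoly_monic).symm
  have hcm : χ.map (residue R) = Abar.charpoly := (Matrix.charpoly_map A (residue R)).symm
  intro F
  constructor
  · intro hF
    -- divide by the monic charpoly
    set r := F %ₘ χ with hr
    have hFr : F = χ * (F /ₘ χ) + r := by
      rw [hr, eq_comm, add_comm]; exact Polynomial.modByMonic_add_div F χ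
    have hrA : (Polynomial.aeval A) r = 0 := by
      have := congrArg (Polynomial.aeval A) hFr
      simpa [_root_.map_mul, hχ, Matrix.aeval_self_charpoly, hF] using this.symm
    -- reduction of r vanishes at Abar, and has degree < deg charpoly, so it's 0
    have hrbar : r.map (residue R) = 0 := by
      by_contra hne
      have h0 : (Polynomial.aeval Abar) (r.map (residue R)) = 0 := by
        rw [aux_aeval_matrix_map, hrA, Matrix.map_zero]; exact map_zero _
      have hdvd : Abar.charpoly ∣ r.map (residue R) := hminp ▸ minpoly.dvd (ResidueField R) Abar h0
      have hlt : r.degree < χ.degree := Polynomial.degree_modByMonic_lt F hmono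
      have h1 : Abar.charpoly.degree ≤ (r.map (residue R)).degree :=
        Polynomial.degree_le_of_dvd hdvd hne
      have h2 : (r.map (residue R)).degree ≤ r.degree := Polynomial.degree_map_le
      rw [Matrix.charpoly_degree_eq_dim, ← Matrix.charpoly_degree_eq_dim A] at h1
      exact absurd (lt_of_le_of_lt (h1.trans h2) hlt) (lt_irrefl _)
    -- so r = C π * s
    obtain ⟨π, hπ⟩ := hprin
    obtain ⟨s, hs⟩ := aux_coeff_mem r hrbar π hπ
    -- π * π = 0
    have hπ2 : π * π = 0 := by
      have : π ∈ maximalIdeal R := hπ ▸ Ideal.subset_span rfl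
      have := Ideal.mul_mem_mul this this
      rwa [← sq, hm2, Ideal.mem_bot] at this
    by_cases hπ0 : π = 0
    · -- then r = 0 and F = χ * (F /ₘ χ)
      rw [Ideal.mem_span_singleton]
      rw [hs, hπ0, map_zero, zero_mul, add_zero] at hFr
      exact ⟨F /ₘ χ, hFr⟩
    -- π • s(A) = 0, hence entries of s(A) are in the maximal ideal
    have hsA : ∀ i j, π * ((Polynomial.aeval A) s) i j = 0 := by
      have h1 : (Polynomial.aeval A) (Polynomial.C π * s) = 0 := hs ▸ hrA
      rw [← Polynomial.smul_eq_C_mul, _root_.map_smul] at h1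
      intro i j
      have h2 := congrFun (congrFun h1 i) j
      simpa [Matrix.smul_apply, smul_eq_mul] using h2
    have hsmem : ∀ i j, ((Polynomial.aeval A) s) i j ∈ maximalIdeal R := by
      intro i j
      rw [mem_maximalIdeal]
      intro hu
      obtain ⟨u, hu⟩ := hu
      apply hπ0
      have := hsA i j
      calc π = π * ((Polynomial.aeval A) s i j * ↑u⁻¹) := by
              rw [← hu, Units.mul_inv, mul_one]
        _ = π * (Polynomial.aeval A) s i j * ↑u⁻¹ := by ring
        _ = 0 := by rw [this, zero_mul]
    -- so sbar(Abar) = 0, hence charpoly of Abar divides sbar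
    have hsbar : (Polynomial.aeval Abar) (s.map (residue R)) = 0 := by
      rw [aux_aeval_matrix_map]
      ext i j
      simp only [Matrix.map_apply, Matrix.zero_apply]
      exact (residue_eq_zero_iff _).mpr (hsmem i j)
    have hdvd : Abar.charpoly ∣ s.map (residue R) := hminp ▸ minpoly.dvd (ResidueField R) Abar hsbar
    obtain ⟨g0, hg0⟩ := hdvd
    obtain ⟨g, rfl⟩ := Polynomial.map_surjective _ residue_surjective g0
    -- s - χ * g reduces to 0
    have hred : (s - χ * g).map (residue R) = 0 := by
      rw [Polynomial.map_sub, Polynomial.map_mul, hcm, ← hg0, sub_self]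
    obtain ⟨h, hh⟩ := aux_coeff_mem _ hred π hπ
    -- now r = C π * s = χ * (C π * g)
    have hrfin : r = χ * (Polynomial.C π * g) := by
      have hs' : s = χ * g + Polynomial.C π * h := by
        rw [← hh]; ring
      rw [hs, hs']
      have : Polynomial.C π * Polynomial.C π = 0 := by
        rw [← Polynomial.C_mul, hπ2, Polynomial.C_0]
      calc Polynomial.C π * (χ * g + Polynomial.C π * h)
          = χ * (Polynomial.C π * g) + Polynomial.C π * Polynomial.C π * h := by ring
        _ = χ * (Polynomial.C π * g) := by rw [this, zero_mul, add_zero]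
    rw [Ideal.mem_span_singleton]
    rw [hrfin] at hFr
    exact ⟨F /ₘ χ + Polynomial.C π * g, by linear_combination hFr⟩
  · intro hF
    obtain ⟨g, rfl⟩ := Ideal.mem_span_singleton.mp hF
    simp [_root_.map_mul, hχ, Matrix.aeval_self_charpoly]
end

section
/- Let R be a local principal ideal ring of length two with maximal ideal m and residue field k. Suppose A ∈ GL_n(R) and F(t) ∈ R[t] is a monic annihilating polynomial of A (F(A) = 0) whose reduction f̄ has degree equal to the degree of the minimal polynomial of Ā over k. Then the null ideal N_A = {G ∈ R[t] : G(A) = 0} equals the principal ideal generated by F. -/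
open Polynomial IsLocalRing Matrix

private lemma aeval_matrix_map {R S : Type*} [CommRing R] [CommRing S] (f : R →+* S)
    {n : ℕ} (A : Matrix (Fin n) (Fin n) R) (p : Polynomial R) :
    (Polynomial.aeval (A.map f)) (p.map f) = ((Polynomial.aeval A) p).map f := by
  have h1 : (A.map f) = f.mapMatrix A := rfl
  have h2 : ((Polynomial.aeval A) p).map f = f.mapMatrix ((Polynomial.aeval A) p) := rfl
  rw [h1, h2, Polynomial.aeval_def, Polynomial.aeval_def, Polynomial.hom_eval₂,
    Polynomial.eval₂_map]
  congr 1
  ext r i j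
  simp [Matrix.algebraMap_eq_diagonal, Matrix.diagonal_apply, apply_ite f]

/-- Let `R` be a local principal ideal ring of length two with residue field `k`.
If `A ∈ GL_n(R)` and `F ∈ R[t]` is a monic annihilating polynomial of `A` whose
reduction has degree equal to the degree of the minimal polynomial of `Ā` over `k`,
then the null ideal of `A` is the principal ideal generated by `F`. -/
theorem null_ideal_eq_span_of_monic_annihilating
    (R : Type*) [CommRing R] [IsLocalRing R]
    (hprin : (maximalIdeal R).IsPrincipal)
    (hm2 : (maximalIdeal R) ^ 2 = ⊥)
    (n : ℕ) (A : Matrix (Fin n) (Fin n) R) (hA : IsUnit A)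
    (F : Polynomial R) (hF : F.Monic) (hFA : (Polynomial.aeval A) F = 0)
    (hdeg : (F.map (residue R)).natDegree =
      (minpoly (ResidueField R) (A.map (residue R))).natDegree) :
    ∀ G : Polynomial R, (Polynomial.aeval A) G = 0 ↔ G ∈ Ideal.span {F} := by
  obtain ⟨π, hπ0⟩ := hprin
  have hπ : maximalIdeal R = Ideal.span {π} := hπ0
  set k := ResidueField R
  set Abar := A.map (residue R) with hAbar
  have hFbar : (F.map (residue R)).Monic := hF.map _
  have hFbarA : (Polynomial.aeval Abar) (F.map (residue R)) = 0 := by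
    rw [aeval_matrix_map, hFA]; simp
  have hmin_ne : minpoly k Abar ≠ 0 := minpoly.ne_zero (Matrix.isIntegral Abar)
  have hdegF : (F.map (residue R)).degree = F.degree := hF.degree_map _
  -- L1 : small-degree annihilating polys over k vanish
  have L1 : ∀ P : Polynomial k, (Polynomial.aeval Abar) P = 0 → P.degree < F.degree → P = 0 := by
    intro P hP hPdeg
    by_contra hP0
    have hdvd : minpoly k Abar ∣ P := minpoly.dvd _ _ hP
    have h1 : (minpoly k Abar).degree ≤ P.degree := Polynomial.degree_le_of_dvd hdvd hP0
    have h2 : (minpoly k Abar).degree = ((minpoly k Abar).natDegree : WithBot ℕ) :=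
      Polynomial.degree_eq_natDegree hmin_ne
    have h3 : (F.map (residue R)).degree = ((F.map (residue R)).natDegree : WithBot ℕ) :=
      Polynomial.degree_eq_natDegree hFbar.ne_zero
    rw [h2, ← hdeg, ← h3, hdegF] at h1
    exact absurd (lt_of_le_of_lt h1 hPdeg) (lt_irrefl _)
  -- coefficients in maximal ideal from vanishing reduction
  have coeff_mem : ∀ S : Polynomial R, S.map (residue R) = 0 → S ∈ Ideal.span {Polynomial.C π} := by
    intro S hS
    have : S ∈ Ideal.map (Polynomial.C : R →+* R[X]) (maximalIdeal R) := by
      rw [Ideal.mem_map_C_iff]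
      intro i
      have hc : residue R (S.coeff i) = 0 := by
        rw [← Polynomial.coeff_map, hS, Polynomial.coeff_zero]
      rw [← IsLocalRing.ker_residue]
      exact RingHom.mem_ker.mpr hc
    rwa [hπ, Ideal.map_span, Set.image_singleton] at this
  have hπm : π ∈ maximalIdeal R := by
    rw [hπ]; exact Ideal.subset_span rfl
  have hπ2 : π * π = 0 := by
    have : π * π ∈ (maximalIdeal R) ^ 2 := by
      rw [sq]; exact Ideal.mul_mem_mul hπm hπm
    rwa [hm2, Ideal.mem_bot] at this
  -- L2 : small-degree annihilating polys over R lie in the span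
  have L2 : ∀ S : Polynomial R, (Polynomial.aeval A) S = 0 → S.degree < F.degree →
      S ∈ Ideal.span {F} := by
    intro S hSA hSdeg
    have hSbar : S.map (residue R) = 0 := by
      apply L1
      · rw [aeval_matrix_map, hSA]; simp
      · exact lt_of_le_of_lt (Polynomial.degree_map_le) hSdeg
    obtain ⟨T, hT⟩ := Ideal.mem_span_singleton'.mp (coeff_mem S hSbar)
    by_cases hπ0 : π = 0
    · rw [← hT, hπ0]; simp [Ideal.zero_mem]
    -- each entry of T(A) lies in the maximal ideal
    have hTA : ∀ i j, ((Polynomial.aeval A) T) i j ∈ maximalIdeal R := by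
      intro i j
      have h0 : π * ((Polynomial.aeval A) T) i j = 0 := by
        have : (Polynomial.aeval A) (T * Polynomial.C π) = 0 := by rw [hT]; exact hSA
        have h := congrFun (congrFun (by simpa [Polynomial.aeval_mul] using this :
          (Polynomial.aeval A) T * algebraMap R (Matrix (Fin n) (Fin n) R) π = 0) i) j
        simpa [Matrix.mul_apply, Matrix.algebraMap_matrix_apply, mul_comm] using h
      by_contra hmem
      have hu : IsUnit (((Polynomial.aeval A) T) i j) := by
        by_contra hnu
        exact hmem ((IsLocalRing.mem_maximalIdeal _).mpr hnu)
      obtain ⟨u, hu⟩ := hu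
      apply hπ0
      have := congrArg (fun x => x * (↑u⁻¹ : R)) h0
      simpa [← hu, mul_assoc] using this
    have hTbar : (Polynomial.aeval Abar) (T.map (residue R)) = 0 := by
      rw [aeval_matrix_map]
      ext i j
      have := hTA i j
      rw [← IsLocalRing.ker_residue, RingHom.mem_ker] at this
      simp [Matrix.map_apply, this]
    -- divide T by F
    have hT2 : T %ₘ F + F * (T /ₘ F) = T := Polynomial.modByMonic_add_div T F
    have hrembar : (T %ₘ F).map (residue R) = 0 := by
      apply L1
      · have : (Polynomial.aeval Abar) ((T %ₘ F).map (residue R) +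
            (F.map (residue R)) * ((T /ₘ F).map (residue R))) = 0 := by
          rw [← Polynomial.map_mul, ← Polynomial.map_add, hT2]; exact hTbar
        simpa [hFbarA] using this
      · exact lt_of_le_of_lt (Polynomial.degree_map_le)
          (Polynomial.degree_modByMonic_lt T hF)
    obtain ⟨T', hT'⟩ := Ideal.mem_span_singleton'.mp (coeff_mem _ hrembar)
    set T₀ := T %ₘ F with hT₀def
    set Q := T /ₘ F with hQdef
    have hzero : T₀ * Polynomial.C π = 0 := by
      rw [← hT']
      have : T' * Polynomial.C π * Polynomial.C π = Polynomial.C (π * π) * T' := by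
        rw [Polynomial.C_mul]; ring
      rw [this, hπ2]
      simp
    have hkey : S = (Q * Polynomial.C π) * F := by
      rw [← hT, ← hT2, add_mul, hzero]
      ring
    rw [hkey]
    exact Ideal.mem_span_singleton'.mpr ⟨Q * Polynomial.C π, rfl⟩
  intro G
  constructor
  · intro hG
    have hmod : G %ₘ F + F * (G /ₘ F) = G := Polynomial.modByMonic_add_div G F
    have hrem : (Polynomial.aeval A) (G %ₘ F) = 0 := by
      have : (Polynomial.aeval A) (G %ₘ F + F * (G /ₘ F)) = 0 := by rw [hmod]; exact hG
      simpa [hFA] using this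
    have hmem : G %ₘ F ∈ Ideal.span {F} :=
      L2 _ hrem (Polynomial.degree_modByMonic_lt G hF)
    have : G = (G %ₘ F) + F * (G /ₘ F) := hmod.symm
    rw [this]
    exact Ideal.add_mem _ hmem (Ideal.mem_span_singleton'.mpr ⟨G /ₘ F, by ring⟩)
  · intro hG
    obtain ⟨c, rfl⟩ := Ideal.mem_span_singleton'.mp hG
    rw [_root_.map_mul, hFA, mul_zero]
end

section
/- Let R be a finite local principal ideal ring of length two with maximal ideal m, and let F(t) ∈ R[t] be a monic polynomial of degree d whose reduction to k[t] is irreducible, where k is the residue field of order q. Let C_F ∈ M_d(R) be the companion matrix of F. Then the centralizer of C_F in GL_d(R) has order |m|^d · (q^d − 1). -/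
open Polynomial IsLocalRing Matrix

/-- The companion matrix of a monic polynomial of degree `d`: ones on the subdiagonal
and the negated coefficients of `F` in the last column. -/
def companionMatrix {R : Type*} [CommRing R] (d : ℕ) (F : Polynomial R) :
    Matrix (Fin d) (Fin d) R :=
  Matrix.of fun i j =>
    if (j : ℕ) = d - 1 then -F.coeff i
    else if (i : ℕ) = (j : ℕ) + 1 then 1 else 0

section Aux

variable {R : Type*} [CommRing R] {d : ℕ} {F : Polynomial R}

private lemma aux_sum_mulVec {ι : Type*} (s : Finset ι) (M : ι → Matrix (Fin d) (Fin d) R)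
    (v : Fin d → R) : (∑ i ∈ s, M i) *ᵥ v = ∑ i ∈ s, (M i *ᵥ v) := by
  ext j
  simp [Matrix.mulVec, dotProduct, Matrix.sum_apply, Finset.sum_apply, Finset.sum_mul]
  rw [Finset.sum_comm]

private lemma comp_col (j : Fin d) (h : (j : ℕ) + 1 < d) :
    companionMatrix d F *ᵥ Pi.single j 1 = Pi.single (⟨(j : ℕ) + 1, h⟩ : Fin d) 1 := by
  funext i
  have hj : (j : ℕ) ≠ d - 1 := by omega
  simp only [mulVec_single, mul_one, companionMatrix, Matrix.of_apply, hj, if_false]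
  rw [Pi.single_apply]
  simp [Fin.ext_iff, eq_comm, hj]

private lemma comp_col_last (j : Fin d) (h : ¬ (j : ℕ) + 1 < d) :
    companionMatrix d F *ᵥ Pi.single j 1 = fun i : Fin d => -F.coeff (i : ℕ) := by
  funext i
  have hj : (j : ℕ) = d - 1 := by have := j.isLt; omega
  simp [companionMatrix, hj]

private lemma pow_mulVec (h0 : 0 < d) (n : ℕ) (hn : n < d) :
    (companionMatrix d F ^ n) *ᵥ Pi.single (⟨0, h0⟩ : Fin d) 1
      = Pi.single (⟨n, hn⟩ : Fin d) 1 := by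
  induction n with
  | zero => rw [pow_zero, Matrix.one_mulVec]
  | succ m ih =>
    have hm : m < d := by omega
    rw [pow_succ', ← Matrix.mulVec_mulVec, ih hm, comp_col ⟨m, hm⟩ hn]

private lemma single_eq_pow_mulVec (h0 : 0 < d) (j : Fin d) :
    (Pi.single j 1 : Fin d → R)
      = (companionMatrix d F ^ (j : ℕ)) *ᵥ Pi.single (⟨0, h0⟩ : Fin d) 1 := by
  rw [pow_mulVec h0 (j : ℕ) j.isLt]

private lemma commute_companion (v : Fin d → R) :
    Commute (∑ i : Fin d, v i • companionMatrix d F ^ (i : ℕ)) (companionMatrix d F) := by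
  refine Commute.sum_left _ _ _ fun i _ => ?_
  exact ((Commute.refl _).pow_left _).smul_left _

private lemma sum_single_eq (v : Fin d → R) :
    (∑ i : Fin d, v i • (Pi.single i 1 : Fin d → R)) = v := by
  funext j
  rw [Finset.sum_apply]
  simp only [Pi.smul_apply, Pi.single_apply, smul_eq_mul, mul_ite, mul_one, mul_zero]
  simp [Finset.sum_ite_eq]

private lemma phi_col0 (h0 : 0 < d) (v : Fin d → R) :
    (∑ i : Fin d, v i • companionMatrix d F ^ (i : ℕ)) *ᵥ Pi.single (⟨0, h0⟩ : Fin d) 1 = v := by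
  rw [aux_sum_mulVec]
  have h : ∀ i : Fin d, (v i • companionMatrix d F ^ (i : ℕ)) *ᵥ Pi.single (⟨0, h0⟩ : Fin d) 1
      = v i • (Pi.single i 1 : Fin d → R) := by
    intro i
    rw [Matrix.smul_mulVec, pow_mulVec h0 (i : ℕ) i.isLt]
  simp_rw [h]
  exact sum_single_eq v

private lemma ext_cols {X Y : Matrix (Fin d) (Fin d) R}
    (h : ∀ j : Fin d, X *ᵥ Pi.single j 1 = Y *ᵥ Pi.single j 1) : X = Y := by
  ext i j
  have := congrFun (h j) i
  simpa using this

private lemma commute_aeval : Commute (aeval (companionMatrix d F) F) (companionMatrix d F) := by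
  have h : (aeval (companionMatrix d F) F) * (aeval (companionMatrix d F) (X : R[X]))
      = (aeval (companionMatrix d F) (X : R[X])) * (aeval (companionMatrix d F) F) := by
    rw [← _root_.map_mul, ← _root_.map_mul, mul_comm]
  simpa [aeval_X, commute_iff_eq] using h

private lemma aeval_companion (hF : F.Monic) (hd : F.natDegree = d) (h0 : 0 < d) :
    aeval (companionMatrix d F) F = 0 := by
  have hcoeffd : F.coeff d = 1 := by rw [← hd]; exact hF.coeff_natDegree
  have hcol0 : (aeval (companionMatrix d F) F) *ᵥ Pi.single (⟨0, h0⟩ : Fin d) 1 = 0 := by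
    rw [aeval_eq_sum_range, hd, Finset.sum_range_succ, hcoeffd, one_smul,
      Matrix.add_mulVec, aux_sum_mulVec]
    have e1 : ∑ x ∈ Finset.range d,
        (F.coeff x • companionMatrix d F ^ x) *ᵥ Pi.single (⟨0, h0⟩ : Fin d) 1
        = fun i : Fin d => F.coeff (i : ℕ) := by
      rw [← Fin.sum_univ_eq_sum_range
        (fun x => (F.coeff x • companionMatrix d F ^ x) *ᵥ Pi.single (⟨0, h0⟩ : Fin d) 1) d]
      have h : ∀ i : Fin d,
          (F.coeff (i : ℕ) • companionMatrix d F ^ (i : ℕ)) *ᵥ Pi.single (⟨0, h0⟩ : Fin d) 1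
          = F.coeff (i : ℕ) • (Pi.single i 1 : Fin d → R) := by
        intro i
        rw [Matrix.smul_mulVec, pow_mulVec h0 (i : ℕ) i.isLt]
      simp_rw [h]
      exact sum_single_eq _
    have e2 : (companionMatrix d F ^ d) *ᵥ Pi.single (⟨0, h0⟩ : Fin d) 1
        = fun i : Fin d => -F.coeff (i : ℕ) := by
      have hpow : companionMatrix d F ^ d
          = companionMatrix d F * companionMatrix d F ^ (d - 1) := by
        rw [← pow_succ', Nat.sub_add_cancel h0]
      rw [hpow, ← Matrix.mulVec_mulVec,
        pow_mulVec h0 (d - 1) (by omega), comp_col_last _ (by simp only [Fin.val_mk]; omega)]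
    rw [e1, e2]
    funext i
    simp
  apply ext_cols
  intro j
  have h1 : (aeval (companionMatrix d F) F) *ᵥ (Pi.single j 1 : Fin d → R)
      = ((companionMatrix d F ^ (j : ℕ)) * aeval (companionMatrix d F) F)
          *ᵥ Pi.single (⟨0, h0⟩ : Fin d) 1 := by
    rw [single_eq_pow_mulVec h0 (F := F) j, Matrix.mulVec_mulVec,
      (commute_aeval.pow_right (j : ℕ)).eq]
  rw [h1, ← Matrix.mulVec_mulVec, hcol0, Matrix.mulVec_zero, Matrix.zero_mulVec]

private lemma phi_of_commute (h0 : 0 < d) {X : Matrix (Fin d) (Fin d) R}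
    (hX : X * companionMatrix d F = companionMatrix d F * X) :
    (∑ i : Fin d, (X *ᵥ Pi.single (⟨0, h0⟩ : Fin d) 1) i • companionMatrix d F ^ (i : ℕ)) = X := by
  set v := X *ᵥ Pi.single (⟨0, h0⟩ : Fin d) 1 with hv
  have hXc : ∀ n : ℕ, X * companionMatrix d F ^ n = companionMatrix d F ^ n * X :=
    fun n => (Commute.pow_right hX n)
  have hYc : ∀ n : ℕ, (∑ i : Fin d, v i • companionMatrix d F ^ (i : ℕ)) * companionMatrix d F ^ n
      = companionMatrix d F ^ n * (∑ i : Fin d, v i • companionMatrix d F ^ (i : ℕ)) :=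
    fun n => (Commute.pow_right (commute_companion v) n)
  apply ext_cols
  intro j
  rw [single_eq_pow_mulVec h0 (F := F) j, Matrix.mulVec_mulVec, Matrix.mulVec_mulVec,
    hYc, hXc, ← Matrix.mulVec_mulVec, ← Matrix.mulVec_mulVec, phi_col0 h0 v]

private lemma companionMatrix_map {S : Type*} [CommRing S] (f : R →+* S) :
    (companionMatrix d F).map f = companionMatrix d (F.map f) := by
  ext i j
  simp [companionMatrix, apply_ite f, coeff_map]

private lemma phi_map {S : Type*} [CommRing S] (f : R →+* S) (v : Fin d → R) :
    (∑ i : Fin d, v i • companionMatrix d F ^ (i : ℕ)).map f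
      = ∑ i : Fin d, f (v i) • companionMatrix d (F.map f) ^ (i : ℕ) := by
  have hsmul : ∀ (r : R) (M : Matrix (Fin d) (Fin d) R), (r • M).map f = f r • M.map f := by
    intro r M
    ext a b
    simp [Matrix.map_apply, Matrix.smul_apply, smul_eq_mul, _root_.map_mul]
  have hpows : ∀ n : ℕ, (companionMatrix d F ^ n).map f = companionMatrix d (F.map f) ^ n := by
    intro n
    induction n with
    | zero => simpa using Matrix.map_one (f : R → S) (map_zero f) (map_one f)
    | succ m ih => rw [pow_succ, pow_succ, ← ih, Matrix.map_mul, companionMatrix_map f]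
  have hsum : (∑ i : Fin d, v i • companionMatrix d F ^ (i : ℕ)).map f
      = ∑ i : Fin d, (v i • companionMatrix d F ^ (i : ℕ)).map f := by
    ext a b
    simp [Matrix.map_apply, Matrix.sum_apply, map_sum]
  rw [hsum]
  exact Finset.sum_congr rfl fun i _ => by rw [hsmul, hpows]

private lemma isUnit_phi_field {K : Type*} [Field K] {d : ℕ} {G : K[X]} (hG : G.Monic)
    (hdG : G.natDegree = d) (h0 : 0 < d) (hirr : Irreducible G) (w : Fin d → K) :
    IsUnit (∑ i : Fin d, w i • companionMatrix d G ^ (i : ℕ)) ↔ w ≠ 0 := by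
  haveI : Nonempty (Fin d) := ⟨⟨0, h0⟩⟩
  constructor
  · rintro hU rfl
    simp only [Pi.zero_apply, zero_smul, Finset.sum_const_zero] at hU
    exact not_isUnit_zero hU
  · intro hw
    set P : K[X] := ∑ i : Fin d, Polynomial.C (w i) * X ^ (i : ℕ) with hP
    have haev : aeval (companionMatrix d G) P
        = ∑ i : Fin d, w i • companionMatrix d G ^ (i : ℕ) := by
      rw [hP, map_sum]
      refine Finset.sum_congr rfl fun i _ => ?_
      rw [_root_.map_mul, map_pow, aeval_X, aeval_C, Algebra.smul_def]
    have hPne : P ≠ 0 := by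
      obtain ⟨i0, hi0⟩ : ∃ i, w i ≠ 0 := by
        by_contra h
        push_neg at h
        exact hw (funext h)
      intro h
      apply hi0
      have h2 := congrArg (fun p => Polynomial.coeff p (i0 : ℕ)) h
      simpa [hP, Polynomial.finset_sum_coeff, coeff_C_mul, coeff_X_pow, Fin.val_eq_val,
        Finset.sum_ite_eq] using h2
    have hdeg : P.degree < G.degree := by
      rw [degree_eq_natDegree hG.ne_zero, hdG, hP]
      refine lt_of_le_of_lt (Polynomial.degree_sum_le _ _) ?_
      refine (Finset.sup_lt_iff (WithBot.bot_lt_coe d)).mpr fun i _ => ?_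
      refine lt_of_le_of_lt (degree_C_mul_X_pow_le _ _) ?_
      exact WithBot.coe_lt_coe.mpr i.isLt
    have hnd : ¬ G ∣ P := fun hdvd =>
      absurd (Polynomial.degree_le_of_dvd hdvd hPne) (not_le.2 hdeg)
    obtain ⟨a, b, hab⟩ := hirr.coprime_iff_not_dvd.mpr hnd
    have h3 := congrArg (aeval (companionMatrix d G)) hab
    rw [map_add, _root_.map_mul, _root_.map_mul, aeval_companion hG hdG h0, mul_zero, zero_add,
      _root_.map_one, haev] at h3
    have hc : (∑ i : Fin d, w i • companionMatrix d G ^ (i : ℕ))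
          * aeval (companionMatrix d G) b
        = aeval (companionMatrix d G) b * (∑ i : Fin d, w i • companionMatrix d G ^ (i : ℕ)) := by
      rw [← haev, ← _root_.map_mul, ← _root_.map_mul, mul_comm]
    exact ⟨⟨_, aeval (companionMatrix d G) b, hc.trans h3, h3⟩, rfl⟩

end Aux

/-- Let `R` be a finite local principal ideal ring of length two with maximal ideal `m`
and residue field `k` of order `q`.  If `F ∈ R[t]` is monic of degree `d` with irreducible
reduction, then the centralizer of the companion matrix `C_F` in `GL_d(R)` has order
`|m|^d · (q^d − 1)`. -/
theorem card_centralizer_companion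
    (R : Type*) [CommRing R] [IsLocalRing R] [Finite R]
    (hprin : (maximalIdeal R).IsPrincipal)
    (hm2 : (maximalIdeal R) ^ 2 = ⊥)
    (d : ℕ) (F : Polynomial R) (hF : F.Monic) (hd : F.natDegree = d)
    (hirr : Irreducible (F.map (residue R))) :
    Nat.card {X : Matrix (Fin d) (Fin d) R //
        IsUnit X ∧ X * companionMatrix d F = companionMatrix d F * X} =
      Nat.card (maximalIdeal R) ^ d * (Nat.card (ResidueField R) ^ d - 1) := by
  classical
  have hGmonic : (F.map (residue R)).Monic := hF.map _
  have hdG : (F.map (residue R)).natDegree = d := by rw [hF.natDegree_map, hd]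
  have h0 : 0 < d := by
    rcases Nat.eq_zero_or_pos d with h | h
    · exfalso
      have h1 : F.map (residue R) = 1 :=
        hGmonic.natDegree_eq_zero.mp (by rw [hdG, h])
      exact hirr.not_isUnit (h1 ▸ isUnit_one)
    · exact h
  have key : ∀ v : Fin d → R,
      IsUnit (∑ i : Fin d, v i • companionMatrix d F ^ (i : ℕ))
        ↔ ¬ ∀ i, v i ∈ maximalIdeal R := by
    intro v
    have e1 : residue R ((∑ i : Fin d, v i • companionMatrix d F ^ (i : ℕ)).det)
        = (∑ i : Fin d,
            (residue R) (v i) • companionMatrix d (F.map (residue R)) ^ (i : ℕ)).det := by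
      rw [RingHom.map_det]
      congr 1
      exact phi_map (residue R) v
    rw [Matrix.isUnit_iff_isUnit_det, ← IsLocalRing.notMem_maximalIdeal,
      ← Ideal.Quotient.eq_zero_iff_mem (I := maximalIdeal R)]
    have e2 : (Ideal.Quotient.mk (maximalIdeal R))
        ((∑ i : Fin d, v i • companionMatrix d F ^ (i : ℕ)).det) = 0
        ↔ (fun i => residue R (v i)) = 0 := by
      show residue R _ = 0 ↔ _
      rw [e1]
      constructor
      · intro hdet
        by_contra hne
        have := (isUnit_phi_field hGmonic hdG h0 hirr (fun i => residue R (v i))).mpr hne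
        rw [Matrix.isUnit_iff_isUnit_det, hdet] at this
        exact not_isUnit_zero this
      · intro hz
        have : (∑ i : Fin d,
            (residue R) (v i) • companionMatrix d (F.map (residue R)) ^ (i : ℕ)) = 0 := by
          have : ∀ i : Fin d, residue R (v i) = 0 := fun i => congrFun hz i
          simp [this]
        rw [this, (haveI := Fin.pos_iff_nonempty.mp h0; Matrix.det_zero)]
    rw [e2]
    constructor
    · intro h hall
      exact h (funext fun i => (Ideal.Quotient.eq_zero_iff_mem).mpr (hall i))
    · intro h hz
      exact h fun i => (Ideal.Quotient.eq_zero_iff_mem).mp (congrFun hz i)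
  have E : {X : Matrix (Fin d) (Fin d) R //
        IsUnit X ∧ X * companionMatrix d F = companionMatrix d F * X}
      ≃ {v : Fin d → R // ¬ ∀ i, v i ∈ maximalIdeal R} :=
    { toFun := fun X => ⟨X.1 *ᵥ Pi.single (⟨0, h0⟩ : Fin d) 1, by
        have h := phi_of_commute h0 X.2.2
        rw [← key]
        rw [h]
        exact X.2.1⟩
      invFun := fun v => ⟨∑ i : Fin d, v.1 i • companionMatrix d F ^ (i : ℕ),
        (key v.1).mpr v.2, (commute_companion v.1).eq⟩
      left_inv := fun X => Subtype.ext (phi_of_commute h0 X.2.2)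
      right_inv := fun v => Subtype.ext (phi_col0 h0 v.1) }
  rw [Nat.card_congr E]
  haveI : Fintype R := Fintype.ofFinite R
  rw [Nat.card_eq_fintype_card, Fintype.card_subtype_compl]
  have c1 : Fintype.card {v : Fin d → R // ∀ i, v i ∈ maximalIdeal R}
      = Nat.card (maximalIdeal R) ^ d := by
    rw [Fintype.card_congr (Equiv.subtypePiEquivPi (p := fun _ (x : R) => x ∈ maximalIdeal R))]
    rw [Fintype.card_fun, Nat.card_eq_fintype_card, Fintype.card_fin]
  have c2 : Fintype.card (Fin d → R)
      = (Nat.card (ResidueField R) * Nat.card (maximalIdeal R)) ^ d := by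
    rw [Fintype.card_fun, Fintype.card_fin, ← Nat.card_eq_fintype_card]
    congr 1
    rw [Submodule.card_eq_card_quotient_mul_card (maximalIdeal R), mul_comm]
    rfl
  rw [c1, c2, mul_pow, Nat.mul_sub, mul_one, mul_comm (Nat.card (ResidueField R) ^ d)]
end

section
/- Hensel-type lifting for matrix equations over a length-two local ring: Let R be a finite local principal ideal ring of length two with maximal ideal m = ⟨π⟩ (π² = 0) and residue field k. Let A ∈ M_n(R) be such that Ā ∈ M_n(k) is regular semisimple (i.e., its characteristic polynomial over k is squarefree, equivalently the centralizer of Ā in M_n(k) equals k[Ā]). Let F(t) ∈ R[t] be monic. If there exists B̃ ∈ M_n(k) with F̄(B̃) = Ā and F̄′(B̃) invertible in M_n(k), then there exists B ∈ M_n(R) with B̄ = B̃ and F(B) = A. -/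
open Polynomial IsLocalRing Matrix



private lemma matrix_comp_algebraMap {R S : Type*} [CommRing R] [CommRing S]
    (f : R →+* S) (n : ℕ) :
    (algebraMap S (Matrix (Fin n) (Fin n) S)).comp f
      = (f.mapMatrix).comp (algebraMap R (Matrix (Fin n) (Fin n) R)) := by
  refine RingHom.ext fun r => ?_
  ext i j
  simp [Matrix.algebraMap_matrix_apply, apply_ite f]

private lemma map_matrix_aeval_old {R S : Type*} [CommRing R] [CommRing S]
    (f : R →+* S) {n : ℕ} (M : Matrix (Fin n) (Fin n) R) (p : R[X]) :
    (Polynomial.aeval M p).map f = Polynomial.aeval (M.map f) (p.map f) := by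
  have h := map_aeval_eq_aeval_map (matrix_comp_algebraMap f n) p M
  simpa [RingHom.mapMatrix_apply] using h

private lemma pow_add_of_sq_zero {A : Type*} [Ring A] {x y : A} (hc : Commute x y)
    (hy : y * y = 0) (m : ℕ) : (x + y) ^ (m + 1) = x ^ (m + 1) + (m + 1) • (x ^ m * y) := by
  induction m with
  | zero => simp
  | succ m ih =>
    have h1 : x ^ m * y * x = x ^ (m + 1) * y := by
      rw [mul_assoc, ← hc.eq, ← mul_assoc, ← pow_succ]
    have h2 : x ^ m * y * y = 0 := by rw [mul_assoc, hy, mul_zero]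
    rw [pow_succ, ih, add_mul, mul_add, smul_mul_assoc, mul_add, smul_add, h1, h2,
      smul_zero, add_zero, ← pow_succ, succ_nsmul (x ^ (m + 1) * y) (m + 1), add_assoc]
    exact congrArg _ (add_comm _ _)

private lemma aeval_add_of_sq_zero {R A : Type*} [CommRing R] [Ring A] [Algebra R A]
    {x y : A} (hc : Commute x y) (hy : y * y = 0) (p : R[X]) :
    Polynomial.aeval (x + y) p
      = Polynomial.aeval x p + Polynomial.aeval x (derivative p) * y := by
  induction p using Polynomial.induction_on' with
  | add p q hp hq =>
    rw [map_add, map_add, hp, hq, derivative_add, map_add, add_mul]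
    abel
  | monomial k a =>
    cases k with
    | zero => simp
    | succ m =>
      rw [aeval_monomial, derivative_monomial, aeval_monomial, pow_add_of_sq_zero hc hy]
      rw [mul_add]
      congr 1
      simp only [aeval_monomial, Nat.add_sub_cancel, nsmul_eq_mul, _root_.map_mul, map_natCast, _root_.map_add, _root_.map_one, mul_assoc,
        Nat.cast_add, Nat.cast_one]


private lemma map_matrix_aeval' {R S : Type*} [CommRing R] [CommRing S]
    (f : R →+* S) {n : ℕ} (M : Matrix (Fin n) (Fin n) R) (p : R[X]) :
    (Polynomial.aeval M p).map f = Polynomial.aeval (M.map f) (p.map f) := by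
  have hcomp : (algebraMap S (Matrix (Fin n) (Fin n) S)).comp f
      = (f.mapMatrix).comp (algebraMap R (Matrix (Fin n) (Fin n) R)) := by
    refine RingHom.ext fun r => ?_
    ext i j
    simp [Matrix.algebraMap_matrix_apply, apply_ite f]
  have h := map_aeval_eq_aeval_map hcomp p M
  simpa [RingHom.mapMatrix_apply] using h

private lemma finrank_range_aeval {K A : Type*} [Field K] [Ring A] [Algebra K A]
    (x : A) (hx : IsIntegral K x) :
    Module.finrank K ((Polynomial.aeval x : K[X] →ₐ[K] A).range) = (minpoly K x).natDegree := by
  have hker : RingHom.ker ((Polynomial.aeval x : K[X] →ₐ[K] A)) = Ideal.span {minpoly K x} := by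
    ext p
    rw [RingHom.mem_ker, Ideal.mem_span_singleton]
    constructor
    · exact fun hp => minpoly.dvd K x hp
    · rintro ⟨c, rfl⟩
      rw [_root_.map_mul, minpoly.aeval, zero_mul]
  have e : (AdjoinRoot (minpoly K x)) ≃ₐ[K] ((Polynomial.aeval x : K[X] →ₐ[K] A).range) := by
    refine AlgEquiv.trans (Ideal.quotientEquivAlgOfEq K ?_)
      (Ideal.quotientKerAlgEquivOfSurjective
        (AlgHom.rangeRestrict_surjective (Polynomial.aeval x : K[X] →ₐ[K] A)))
    rw [AlgHom.ker_rangeRestrict, hker]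
  rw [← e.toLinearEquiv.finrank_eq]
  simpa using (AdjoinRoot.powerBasis' (minpoly.monic hx)).finrank

private lemma prime_dvd_minpoly {K : Type*} [Field K] {n : ℕ} {M : Matrix (Fin n) (Fin n) K}
    {p : K[X]} (hp : Prime p) (hpchi : p ∣ M.charpoly) : p ∣ minpoly K M := by
  by_contra hnd
  have hcop : IsCoprime p (minpoly K M) := (hp.coprime_iff_not_dvd).mpr hnd
  set L := AlgebraicClosure K with hL
  set f := algebraMap K L with hf
  set N := M.map f with hN
  have hpdeg : ((p.map f)).degree ≠ 0 := by
    rw [Polynomial.degree_map]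
    exact (Polynomial.degree_pos_of_irreducible hp.irreducible).ne'
  obtain ⟨l, hl⟩ := IsAlgClosed.exists_root (p.map f) hpdeg
  have hroot : (N.charpoly).IsRoot l := by
    rw [Matrix.charpoly_map]
    exact hl.dvd (Polynomial.map_dvd f hpchi)
  -- turn the charpoly root into an eigenvalue
  have hdet : (l • (1 : Matrix (Fin n) (Fin n) L) - N).det = 0 := by
    have h1 : ((charmatrix N).map (eval l)) = l • (1 : Matrix (Fin n) (Fin n) L) - N := by
      ext i j
      by_cases h : i = j <;>
        simp [Matrix.map_apply, Matrix.charmatrix_apply, h, Matrix.diagonal, Matrix.sub_apply,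
          Matrix.one_apply, Matrix.smul_apply]
    have h2 : (Polynomial.evalRingHom l) (charmatrix N).det
        = ((charmatrix N).map (Polynomial.evalRingHom l)).det := by
      rw [RingHom.map_det, RingHom.mapMatrix_apply]
    have h3 : Polynomial.eval l (N.charpoly) = 0 := hroot
    rw [← h1]
    rw [Matrix.charpoly] at h3
    simpa [coe_evalRingHom] using h2.symm.trans h3
  obtain ⟨v, hv0, hv⟩ := (Matrix.exists_mulVec_eq_zero_iff).mpr hdet
  have hvN : N.mulVec v = l • v := by
    rw [Matrix.sub_mulVec, Matrix.smul_mulVec, Matrix.one_mulVec, sub_eq_zero] at hv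
    exact hv.symm
  set φ : Module.End L (Fin n → L) := Matrix.toLin' N with hφ
  have hev : φ.HasEigenvalue l := by
    refine Module.End.hasEigenvalue_of_hasEigenvector (x := v) ⟨?_, hv0⟩
    rw [Module.End.mem_eigenspace_iff]
    show Matrix.toLin' N v = l • v
    rw [Matrix.toLin'_apply, hvN]
  have hminroot : (minpoly L N).IsRoot l := by
    have := Module.End.hasEigenvalue_iff_isRoot.mp hev
    rwa [hφ, Matrix.minpoly_toLin'] at this
  have hdvd : minpoly L N ∣ (minpoly K M).map f := by
    refine minpoly.dvd L N ?_
    rw [← map_matrix_aeval', minpoly.aeval]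
    exact Matrix.map_zero _ (map_zero f)
  have hμroot : ((minpoly K M).map f).IsRoot l := hminroot.dvd hdvd
  obtain ⟨a, b, hab⟩ := hcop.map (Polynomial.mapRingHom f)
  have := congrArg (Polynomial.eval l) hab
  simp only [coe_mapRingHom, eval_add, eval_mul, hl.eq_zero, hμroot.eq_zero, mul_zero,
    add_zero, eval_one] at this
  exact one_ne_zero this.symm

private lemma natDegree_minpoly_of_squarefree_charpoly {K : Type*} [Field K] {n : ℕ}
    (M : Matrix (Fin n) (Fin n) K) (h : Squarefree M.charpoly) :
    (minpoly K M).natDegree = n := by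
  obtain ⟨q, hq⟩ := Matrix.minpoly_dvd_charpoly M
  have hchi0 : M.charpoly ≠ 0 := (Matrix.charpoly_monic M).ne_zero
  have hmin0 : minpoly K M ≠ 0 := minpoly.ne_zero (Matrix.isIntegral M)
  have hq0 : q ≠ 0 := by
    rintro rfl
    rw [mul_zero] at hq
    exact hchi0 hq
  have hqu : IsUnit q := by
    by_contra hqu
    obtain ⟨p, hpirr, hpq⟩ := WfDvdMonoid.exists_irreducible_factor hqu hq0
    have hpp : Prime p := hpirr.prime
    have hpchi : p ∣ M.charpoly := hq ▸ Dvd.dvd.mul_left hpq _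
    have hpmin : p ∣ minpoly K M := prime_dvd_minpoly hpp hpchi
    have : p * p ∣ M.charpoly := hq ▸ mul_dvd_mul hpmin hpq
    exact hpp.not_unit (h p this)
  have hdeg := congrArg Polynomial.natDegree hq
  rw [Matrix.charpoly_natDegree_eq_dim, Fintype.card_fin,
    Polynomial.natDegree_mul hmin0 hq0, natDegree_eq_zero_of_isUnit hqu, add_zero] at hdeg
  omega


/-- Hensel-type lifting for matrix equations over a length-two local ring:
if `Ā` is regular semisimple (squarefree characteristic polynomial over the residue
field), `F ∈ R[t]` is monic, and `B̃` satisfies `F̄(B̃) = Ā` with `F̄′(B̃)` invertible,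
then `B̃` lifts to `B ∈ M_n(R)` with `F(B) = A`. -/
theorem hensel_lifting_for_matrices
    (R : Type*) [CommRing R] [IsLocalRing R] [Finite R]
    (hprin : (maximalIdeal R).IsPrincipal)
    (hm2 : (maximalIdeal R) ^ 2 = ⊥)
    (n : ℕ) (A : Matrix (Fin n) (Fin n) R)
    (hreg : Squarefree (Matrix.charpoly (A.map (residue R))))
    (F : Polynomial R) (hF : F.Monic)
    (B' : Matrix (Fin n) (Fin n) (ResidueField R))
    (hroot : (Polynomial.aeval B') (F.map (residue R)) = A.map (residue R))
    (hder : IsUnit ((Polynomial.aeval B') (Polynomial.derivative (F.map (residue R))))) :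
    ∃ B : Matrix (Fin n) (Fin n) R,
      B.map (residue R) = B' ∧ (Polynomial.aeval B) F = A := by
  classical
  rcases Nat.eq_zero_or_pos n with rfl | hn
  · exact ⟨A, Subsingleton.elim _ _, Subsingleton.elim _ _⟩
  set Abar := A.map (residue R) with hAbar
  set Fbar := F.map (residue R) with hFbar
  -- Step 1 : B' is a polynomial expression in Abar
  have hAint : IsIntegral (ResidueField R) Abar := Matrix.isIntegral Abar
  have hBint : IsIntegral (ResidueField R) B' := Matrix.isIntegral B'
  have hle : (Polynomial.aeval Abar :
        (ResidueField R)[X] →ₐ[ResidueField R] Matrix (Fin n) (Fin n) (ResidueField R)).range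
      ≤ (Polynomial.aeval B').range := by
    rintro z ⟨p, rfl⟩
    induction p using Polynomial.induction_on' with
    | add p r hp hr => rw [map_add]; exact Subalgebra.add_mem _ hp hr
    | monomial k a =>
      refine ⟨C a * Fbar ^ k, ?_⟩
      show (Polynomial.aeval B') (C a * Fbar ^ k) = (Polynomial.aeval Abar) ((monomial k) a)
      rw [_root_.map_mul, map_pow, aeval_C, hroot, aeval_monomial]
  have h1 : Module.finrank (ResidueField R) ((Polynomial.aeval Abar :
      (ResidueField R)[X] →ₐ[ResidueField R] Matrix (Fin n) (Fin n) (ResidueField R)).range)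
      = n := by
    rw [finrank_range_aeval _ hAint, natDegree_minpoly_of_squarefree_charpoly _ hreg]
  have h2 : Module.finrank (ResidueField R) ((Polynomial.aeval B' :
      (ResidueField R)[X] →ₐ[ResidueField R] Matrix (Fin n) (Fin n) (ResidueField R)).range)
      ≤ n := by
    rw [finrank_range_aeval _ hBint]
    have h3 := Polynomial.natDegree_le_of_dvd (Matrix.minpoly_dvd_charpoly B')
      (Matrix.charpoly_monic B').ne_zero
    rwa [Matrix.charpoly_natDegree_eq_dim, Fintype.card_fin] at h3
  have heq : (Polynomial.aeval Abar :
        (ResidueField R)[X] →ₐ[ResidueField R] Matrix (Fin n) (Fin n) (ResidueField R)).range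
      = (Polynomial.aeval B').range := by
    have hfin : FiniteDimensional (ResidueField R)
        (Matrix (Fin n) (Fin n) (ResidueField R)) := by infer_instance
    apply Subalgebra.toSubmodule_injective
    apply Submodule.eq_of_le_of_finrank_le
    · exact Subalgebra.toSubmodule.monotone hle
    · rw [Subalgebra.finrank_toSubmodule, Subalgebra.finrank_toSubmodule, h1]
      exact h2
  have hB'mem : B' ∈ (Polynomial.aeval Abar :
      (ResidueField R)[X] →ₐ[ResidueField R] Matrix (Fin n) (Fin n) (ResidueField R)).range := by
    rw [heq]
    exact ⟨X, aeval_X B'⟩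
  obtain ⟨qp, hqp⟩ := hB'mem
  -- Step 2 : lift to R
  obtain ⟨g, hg⟩ := Polynomial.map_surjective (residue R) residue_surjective qp
  set B₀ := Polynomial.aeval A g with hB₀
  have hB₀bar : B₀.map (residue R) = B' := by
    rw [hB₀, map_matrix_aeval', hg, ← hAbar]
    exact hqp
  have hres0 : ∀ x : R, residue R x = 0 ↔ x ∈ maximalIdeal R := fun x =>
    Ideal.Quotient.eq_zero_iff_mem
  set E := A - Polynomial.aeval B₀ F with hE
  have hEbar : E.map (residue R) = 0 := by
    have h4 : (Polynomial.aeval B₀ F).map (residue R) = Abar := by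
      rw [map_matrix_aeval', hB₀bar, ← hFbar, hroot]
    have h5 : E.map (residue R) = A.map (residue R) - (Polynomial.aeval B₀ F).map (residue R) := by
      ext i j
      simp [hE, Matrix.map_apply, Matrix.sub_apply]
    rw [h5, h4, ← hAbar, sub_self]
  have hEmem : ∀ i j, E i j ∈ maximalIdeal R := by
    intro i j
    rw [← hres0]
    have h6 := Matrix.ext_iff.mpr hEbar i j
    simpa [Matrix.map_apply] using h6
  have hmul0 : ∀ a b : R, a ∈ maximalIdeal R → b ∈ maximalIdeal R → a * b = 0 := by
    intro a b ha hb
    have h5 : a * b ∈ (maximalIdeal R) ^ 2 := by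
      rw [pow_two]; exact Ideal.mul_mem_mul ha hb
    rwa [hm2, Ideal.mem_bot] at h5
  set U := Polynomial.aeval B₀ (derivative F) with hU
  have hUbar : U.map (residue R) = Polynomial.aeval B' (derivative Fbar) := by
    rw [hU, map_matrix_aeval', hB₀bar, ← derivative_map, ← hFbar]
  have hUunit : IsUnit U := by
    have h6 : IsUnit (U.map (residue R)) := by rw [hUbar]; exact hder
    rw [Matrix.isUnit_iff_isUnit_det] at h6 ⊢
    have h7 : residue R U.det = (U.map (residue R)).det := by
      rw [RingHom.map_det, RingHom.mapMatrix_apply]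
    by_contra hnu
    have h8 : U.det ∈ maximalIdeal R :=
      (IsLocalRing.mem_maximalIdeal _).mpr (mem_nonunits_iff.mpr hnu)
    have h9 : (U.map (residue R)).det = 0 := by rw [← h7, (hres0 _).mpr h8]
    rw [h9] at h6
    simpa using h6
  obtain ⟨u, hu⟩ := hUunit
  set C := (↑u⁻¹ : Matrix (Fin n) (Fin n) R) * E with hC
  have hCmem : ∀ i j, C i j ∈ maximalIdeal R := by
    intro i j
    rw [hC, Matrix.mul_apply]
    exact Ideal.sum_mem _ fun k _ => Ideal.mul_mem_left _ _ (hEmem k j)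
  have hCC : C * C = 0 := by
    ext i j
    rw [Matrix.mul_apply, Matrix.zero_apply]
    exact Finset.sum_eq_zero fun k _ => hmul0 _ _ (hCmem i k) (hCmem k j)
  have hkey : ∀ (M : Matrix (Fin n) (Fin n) R) (p q₁ : R[X]),
      Commute (Polynomial.aeval M p) (Polynomial.aeval M q₁) := by
    intro M p q₁
    show _ * _ = _ * _
    rw [← _root_.map_mul, ← _root_.map_mul, mul_comm]
  have hB₀A : Commute B₀ A := by
    rw [hB₀]
    have h10 := hkey A g X
    simpa [aeval_X] using h10
  have hB₀p : ∀ p : R[X], Commute B₀ (Polynomial.aeval B₀ p) := by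
    intro p
    have h11 := hkey B₀ X p
    simpa [aeval_X] using h11
  have hcommE : Commute B₀ E := by
    rw [hE]
    exact hB₀A.sub_right (hB₀p F)
  have hcommU : Commute B₀ (↑u : Matrix (Fin n) (Fin n) R) := by
    rw [hu, hU]
    exact hB₀p _
  have hcommC : Commute B₀ C := by
    rw [hC]
    exact (hcommU.units_inv_right).mul_right hcommE
  refine ⟨B₀ + C, ?_, ?_⟩
  · have hCbar : C.map (residue R) = 0 := by
      ext i j
      rw [Matrix.map_apply, Matrix.zero_apply]
      exact (hres0 _).mpr (hCmem i j)
    have h12 : (B₀ + C).map (residue R) = B₀.map (residue R) + C.map (residue R) := by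
      ext i j
      simp [Matrix.map_apply, Matrix.add_apply]
    rw [h12, hB₀bar, hCbar, add_zero]
  · rw [aeval_add_of_sq_zero hcommC hCC F, ← hU, ← hu, hC, ← mul_assoc, Units.mul_inv,
      one_mul, hE]
    abel
end

section
/- Let R be a finite local principal ideal ring of length two with residue field k of odd characteristic p, and let L be a positive integer coprime to p. Let A ∈ GL_n(R) be such that Ā ∈ GL_n(k) is regular semisimple with irreducible characteristic polynomial. Then A is an L-th power in GL_n(R) if and only if Ā is an L-th power in GL_n(k). -/
open Polynomial IsLocalRing Matrix

section Aux

lemma commute_aeval_of_commute {S : Type*} {k : Type*} [CommSemiring k] [Semiring S]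
    [Algebra k S] {x y : S} (h : Commute x y) (g : k[X]) :
    Commute x (aeval y g) := by
  induction g using Polynomial.induction_on' with
  | add p q hp hq => simpa [map_add] using hp.add_right hq
  | monomial i a =>
      rw [aeval_monomial]
      exact Commute.mul_right (by exact (Algebra.commutes a x).symm) (h.pow_right i)

lemma pow_add_sq_zero {S : Type*} [Ring S] {x e : S} (h : Commute x e) (he : e * e = 0)
    (m : ℕ) : (x + e) ^ (m + 1) = x ^ (m + 1) + (m + 1) • (x ^ m * e) := by
  induction m with
  | zero => simp
  | succ m ih =>
    have hex : e * x = x * e := h.symm.eq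
    rw [pow_succ, ih, add_mul, smul_mul_assoc, mul_add, mul_add, mul_assoc (x ^ m) e x, hex,
      mul_assoc (x ^ m) e e, he, mul_zero, add_zero, ← mul_assoc, ← pow_succ, ← pow_succ]
    conv_rhs => rw [succ_nsmul]
    rw [add_assoc, add_comm (x ^ (m + 1) * e) ((m + 1) • (x ^ (m + 1) * e))]

lemma exists_aeval_eq_of_commute {k : Type*} [Field k] {n : ℕ}
    (M C : Matrix (Fin n) (Fin n) k) (hirr : Irreducible M.charpoly)
    (hC : Commute C M) : ∃ g : k[X], aeval M g = C := by
  haveI : Fact (Irreducible M.charpoly) := ⟨hirr⟩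
  set q := M.charpoly with hq
  have hq0 : q ≠ 0 := (Matrix.charpoly_monic M).ne_zero
  set F := AdjoinRoot q
  let ψ : F →+* Matrix (Fin n) (Fin n) k :=
    Ideal.Quotient.lift (Ideal.span {q}) (aeval M : k[X] →ₐ[k] _).toRingHom (by
      intro a ha
      obtain ⟨b, rfl⟩ := Ideal.mem_span_singleton'.mp ha
      rw [AlgHom.toRingHom_eq_coe, RingHom.coe_coe, _root_.map_mul,
        show (aeval M) q = 0 from Matrix.aeval_self_charpoly M, mul_zero])
  have hψmk : ∀ g : k[X], ψ (AdjoinRoot.mk q g) = aeval M g := by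
    intro g; rfl
  set V := Fin n → k
  let ρ : F →+* Module.End k V :=
    ((Matrix.toLinAlgEquiv' : Matrix (Fin n) (Fin n) k ≃ₐ[k] _).toAlgHom.toRingHom).comp ψ
  letI : Module F V := Module.compHom V ρ
  have hsmul : ∀ (f : F) (v : V), f • v = (ψ f).mulVec v := fun f v => rfl
  have halg : ∀ c : k, ψ (algebraMap k F c) = algebraMap k _ c := by
    intro c
    rw [AdjoinRoot.algebraMap_eq, AdjoinRoot.of]
    show ψ (AdjoinRoot.mk q (Polynomial.C c)) = _
    rw [hψmk, aeval_C]
  haveI : IsScalarTower k F V := ⟨by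
    intro c f v
    rw [hsmul, hsmul, Algebra.smul_def, _root_.map_mul, halg, ← Matrix.mulVec_mulVec,
      Algebra.algebraMap_eq_smul_one, Matrix.smul_mulVec, Matrix.one_mulVec]⟩
  have hdeg : q.natDegree = n := by
    rw [hq, Matrix.charpoly_natDegree_eq_dim, Fintype.card_fin]
  have hn : n ≠ 0 := by rw [← hdeg]; exact hirr.natDegree_pos.ne'
  have hFk : Module.finrank k F = n := by
    rw [(AdjoinRoot.powerBasis hq0).finrank, AdjoinRoot.powerBasis_dim, hdeg]
  have hV : Module.finrank k V = n := by
    simp [V, Module.finrank_pi]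
  have h1 : Module.finrank F V = 1 := by
    have h := Module.finrank_mul_finrank k F V
    rw [hFk, hV] at h
    exact Nat.eq_of_mul_eq_mul_left (Nat.pos_of_ne_zero hn) (h.trans (mul_one n).symm)
  obtain ⟨v, hv0, hvspan⟩ := finrank_eq_one_iff'.mp h1
  obtain ⟨f, hf⟩ := hvspan (C.mulVec v)
  obtain ⟨g, rfl⟩ := AdjoinRoot.mk_surjective f
  refine ⟨g, ?_⟩
  apply Matrix.toLinAlgEquiv'.injective
  refine LinearMap.ext fun w => ?_
  obtain ⟨c, rfl⟩ := hvspan w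
  obtain ⟨h, rfl⟩ := AdjoinRoot.mk_surjective c
  rw [hsmul] at hf ⊢
  rw [hψmk] at hf ⊢
  rw [Matrix.toLinAlgEquiv'_apply, Matrix.toLinAlgEquiv'_apply, Matrix.mulVec_mulVec,
    Matrix.mulVec_mulVec, (commute_aeval_of_commute hC h).eq, ← Matrix.mulVec_mulVec,
    ← Matrix.mulVec_mulVec, ← hf, Matrix.mulVec_mulVec, Matrix.mulVec_mulVec,
    ← _root_.map_mul, ← _root_.map_mul, mul_comm g h]

end Aux

/-- Let `R` be a finite local principal ideal ring of length two whose residue field has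
odd prime characteristic `p`, and let `L > 0` be coprime to `p`.  If `A ∈ GL_n(R)` is
such that `Ā ∈ GL_n(k)` has irreducible characteristic polynomial, then `A` is an `L`-th
power in `GL_n(R)` iff `Ā` is an `L`-th power in `GL_n(k)`. -/
theorem isLthPower_iff_reduction_isLthPower
    (R : Type*) [CommRing R] [IsLocalRing R] [Finite R]
    (hprin : (maximalIdeal R).IsPrincipal)
    (hm2 : (maximalIdeal R) ^ 2 = ⊥)
    (p : ℕ) (hp : p.Prime) (hodd : p ≠ 2) [CharP (ResidueField R) p]
    (L : ℕ) (hL : 0 < L) (hcop : Nat.Coprime L p)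
    (n : ℕ) (A : Matrix (Fin n) (Fin n) R) (hA : IsUnit A)
    (hirr : Irreducible (Matrix.charpoly (A.map (residue R)))) :
    (∃ B : Matrix (Fin n) (Fin n) R, IsUnit B ∧ B ^ L = A) ↔
      (∃ C : Matrix (Fin n) (Fin n) (ResidueField R),
        IsUnit C ∧ C ^ L = A.map (residue R)) := by
  classical
  let red : Matrix (Fin n) (Fin n) R →+* Matrix (Fin n) (Fin n) (ResidueField R) :=
    (residue R).mapMatrix
  have hred : ∀ X : Matrix (Fin n) (Fin n) R, red X = X.map (residue R) := fun _ => rfl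
  have hunit : ∀ X : Matrix (Fin n) (Fin n) R, IsUnit (red X) → IsUnit X := by
    intro X hX
    rw [Matrix.isUnit_iff_isUnit_det] at hX ⊢
    have hdet : residue R X.det = (red X).det := (residue R).map_det X
    by_contra hnot
    have h0 : residue R X.det = 0 :=
      (residue_eq_zero_iff _).mpr (mem_maximalIdeal _ |>.mpr hnot)
    rw [h0] at hdet
    exact not_isUnit_zero (hdet ▸ hX)
  constructor
  · rintro ⟨B, hB, rfl⟩
    exact ⟨red B, hB.map red, (map_pow red B L).symm⟩
  · rintro ⟨C, hC, hCL⟩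
    obtain ⟨m, rfl⟩ : ∃ m, L = m + 1 := ⟨L - 1, (Nat.succ_pred_eq_of_pos hL).symm⟩
    have hcomm : Commute C (A.map (residue R)) := by
      rw [← hCL]; exact (Commute.refl C).pow_right _
    obtain ⟨g, hg⟩ := exists_aeval_eq_of_commute (A.map (residue R)) C hirr hcomm
    obtain ⟨G, hG⟩ := Polynomial.map_surjective (residue R) residue_surjective g
    set B₀ := aeval A G with hB₀def
    have hredalg : red.comp (algebraMap R (Matrix (Fin n) (Fin n) R)) =
        (algebraMap (ResidueField R) (Matrix (Fin n) (Fin n) (ResidueField R))).comp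
          (residue R) := by
      refine RingHom.ext fun r => ?_
      ext i j
      simp [red, Matrix.algebraMap_matrix_apply, apply_ite (residue R)]
    have hredB₀ : red B₀ = C := by
      rw [hB₀def, aeval_def, Polynomial.hom_eval₂, hredalg, ← Polynomial.eval₂_map, hG,
        ← aeval_def, hred, hg]
    -- L is invertible
    have hLk : (((m + 1 : ℕ)) : ResidueField R) ≠ 0 := by
      rw [Ne, CharP.cast_eq_zero_iff (ResidueField R) p]
      exact (Nat.Prime.coprime_iff_not_dvd hp).mp hcop.symm
    set u := ((m + 1 : ℕ) : Matrix (Fin n) (Fin n) R) * B₀ ^ m with hudef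
    have hredu : red u = ((m + 1 : ℕ) : Matrix (Fin n) (Fin n) (ResidueField R)) * C ^ m := by
      rw [hudef, _root_.map_mul, map_natCast, map_pow, hredB₀]
    have huu : IsUnit u := by
      apply hunit
      rw [hredu]
      have h1 : IsUnit ((m + 1 : ℕ) : Matrix (Fin n) (Fin n) (ResidueField R)) := by
        rw [← map_natCast (algebraMap (ResidueField R) (Matrix (Fin n) (Fin n) (ResidueField R)))]
        exact (isUnit_iff_ne_zero.mpr hLk).map _
      exact h1.mul (hC.pow m)
    set D := A - B₀ ^ (m + 1) with hDdef
    have hredD : red D = 0 := by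
      rw [hDdef, map_sub, map_pow, hredB₀, hCL, hred, sub_self]
    have hDm : ∀ i j, D i j ∈ maximalIdeal R := by
      intro i j
      have : red D i j = residue R (D i j) := rfl
      rw [hredD] at this
      exact (residue_eq_zero_iff _).mp this.symm
    set E := (↑huu.unit⁻¹ : Matrix (Fin n) (Fin n) R) * D with hEdef
    have hEm : ∀ i j, E i j ∈ maximalIdeal R := by
      intro i j
      rw [hEdef, Matrix.mul_apply]
      exact Ideal.sum_mem _ fun v _ => Ideal.mul_mem_left _ _ (hDm v j)
    have hmul0 : ∀ X Y : Matrix (Fin n) (Fin n) R, (∀ i j, X i j ∈ maximalIdeal R) →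
        (∀ i j, Y i j ∈ maximalIdeal R) → X * Y = 0 := by
      intro X Y hX hY
      ext i j
      rw [Matrix.mul_apply, Matrix.zero_apply]
      refine Finset.sum_eq_zero fun v _ => ?_
      have hmem : X i v * Y v j ∈ (maximalIdeal R) ^ 2 := by
        rw [sq]; exact Ideal.mul_mem_mul (hX i v) (hY v j)
      rw [hm2] at hmem
      exact Ideal.mem_bot.mp hmem
    have hEE : E * E = 0 := hmul0 E E hEm hEm
    have hAB : Commute A B₀ := commute_aeval_of_commute (Commute.refl A) G
    have hBu : Commute B₀ u :=
      Commute.mul_right ((Nat.cast_commute (m + 1) B₀).symm) ((Commute.refl B₀).pow_right m)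
    have hBuinv : Commute B₀ (↑huu.unit⁻¹ : Matrix (Fin n) (Fin n) R) := by
      have h2 : Commute B₀ (huu.unit : Matrix (Fin n) (Fin n) R) := by
        rw [IsUnit.unit_spec]; exact hBu
      exact h2.units_inv_right
    have hBD : Commute B₀ D := (hAB.symm).sub_right ((Commute.refl B₀).pow_right (m + 1))
    have hBE : Commute B₀ E := hBuinv.mul_right hBD
    have huE : u * E = D := by
      rw [hEdef, ← mul_assoc]
      calc u * ↑huu.unit⁻¹ * D = (↑huu.unit * ↑huu.unit⁻¹ : Matrix (Fin n) (Fin n) R) * D := by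
            rw [huu.unit_spec]
        _ = D := by rw [Units.mul_inv, one_mul]
    have hredE : red E = 0 := by
      ext i j
      show residue R (E i j) = 0
      exact (residue_eq_zero_iff _).mpr (hEm i j)
    refine ⟨B₀ + E, ?_, ?_⟩
    · apply hunit
      rw [map_add, hredB₀, hredE, add_zero]
      exact hC
    · rw [pow_add_sq_zero hBE hEE m]
      have hsm : (m + 1) • (B₀ ^ m * E) = u * E := by
        rw [hudef, nsmul_eq_mul, mul_assoc, Nat.cast_add, Nat.cast_one]
      rw [hsm, huE, hDdef, add_sub_cancel]
end

section
/- Let h(t) ∈ F_q[t] be an irreducible polynomial of degree d, and let E = F_q[t]/⟨h(t)⟩. Then the rings F_q[t]/⟨h(t)^r⟩ and E[u]/⟨u^r⟩ are isomorphic. -/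
open Polynomial

private theorem quotient_power_ringEquiv_aux (F : Type*) [Field F] [Fintype F]
    (h : Polynomial F) (hirr : Irreducible h) (r : ℕ) (hr : 0 < r) :
    Nonempty ((AdjoinRoot (h ^ r)) ≃+*
      (Polynomial (AdjoinRoot h) ⧸ Ideal.span {(X : Polynomial (AdjoinRoot h)) ^ r})) := by
  classical
  haveI := Fact.mk hirr
  have hh0 : h ≠ 0 := hirr.ne_zero
  set E := AdjoinRoot h with hEdef
  set tb : E := AdjoinRoot.root h with htb
  set H : Polynomial E := h.map (algebraMap F E) with hHdef
  set P : Polynomial E := H.comp (X + C tb) with hPdef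
  -- basic facts
  have haeval_h : H.eval tb = 0 := by
    rw [hHdef, AdjoinRoot.algebraMap_eq, eval_map]
    exact AdjoinRoot.eval₂_root h
  have hsep : h.Separable := PerfectField.separable_of_irreducible hirr
  have hder : ((derivative h).map (algebraMap F E)).eval tb ≠ 0 := by
    obtain ⟨a, b, hab⟩ := hsep
    intro h0
    have := congrArg (fun p : Polynomial F => ((p.map (algebraMap F E)).eval tb)) hab
    simp only [Polynomial.map_add, Polynomial.map_mul, eval_add, eval_mul, Polynomial.map_one,
      eval_one, haeval_h, h0, mul_zero, add_zero, zero_add] at this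
    rw [← hHdef, haeval_h, mul_zero] at this
    exact one_ne_zero this.symm
  -- P = X * Q with Q.eval 0 ≠ 0
  have hP0 : P.eval 0 = 0 := by
    simp [hPdef, eval_comp, haeval_h]
  obtain ⟨Q, hQ⟩ : (X : Polynomial E) ∣ P := by
    rw [X_dvd_iff, coeff_zero_eq_eval_zero]; exact hP0
  have hQ0 : Q.eval 0 ≠ 0 := by
    have hdP : (derivative P).eval 0 = (derivative H).eval tb := by
      rw [hPdef, derivative_comp]
      simp [eval_comp]
    have hdP' : (derivative P).eval 0 ≠ 0 := by
      rw [hdP, hHdef, derivative_map]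
      exact hder
    rw [hQ] at hdP'
    simpa using hdP'
  -- the map ψ
  set R₂ := Polynomial E ⧸ Ideal.span {(X : Polynomial E) ^ r} with hR2
  set mk₂ := Ideal.Quotient.mk (Ideal.span {(X : Polynomial E) ^ r}) with hmk2
  set ψ : Polynomial F →+* R₂ :=
    mk₂.comp (eval₂RingHom ((C : E →+* Polynomial E).comp (algebraMap F E)) (X + C tb)) with hψ
  have hψ_eq : ∀ p : Polynomial F,
      ψ p = mk₂ ((p.map (algebraMap F E)).comp (X + C tb)) := by
    intro p
    rw [hψ]
    simp only [RingHom.coe_comp, Function.comp_apply, coe_eval₂RingHom]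
    congr 1
    rw [comp, eval₂_map]
  have hXr_mem : ∀ p : Polynomial F, ψ p = 0 ↔
      (X : Polynomial E) ^ r ∣ (p.map (algebraMap F E)).comp (X + C tb) := by
    intro p
    rw [hψ_eq, Ideal.Quotient.eq_zero_iff_mem, Ideal.mem_span_singleton]
  -- h^r is in the kernel
  have hker_le : ∀ p ∈ Ideal.span {h ^ r}, ψ p = 0 := by
    intro p hp
    rw [Ideal.mem_span_singleton] at hp
    obtain ⟨c, rfl⟩ := hp
    rw [hXr_mem, Polynomial.map_mul, Polynomial.map_pow, mul_comp, pow_comp]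
    exact Dvd.dvd.mul_right (pow_dvd_pow_of_dvd ⟨Q, hQ⟩ r) _
  -- h^(r-1) not in kernel
  have hnotker : ψ (h ^ (r - 1)) ≠ 0 := by
    intro h0
    rw [hXr_mem, Polynomial.map_pow, pow_comp] at h0
    have hQ' : (map (algebraMap F E) h).comp (X + C tb) = X * Q := hQ
    rw [hQ', mul_pow] at h0
    have hre : r = (r - 1) + 1 := (Nat.succ_pred_eq_of_pos hr).symm
    rw [hre, pow_succ] at h0
    have hXne : (X : Polynomial E) ^ (r - 1) ≠ 0 := pow_ne_zero _ X_ne_zero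
    have hXQ : (X : Polynomial E) ∣ Q ^ (r - 1) :=
      (mul_dvd_mul_iff_left hXne).mp h0
    have : (X : Polynomial E) ∣ Q := Polynomial.prime_X.dvd_of_dvd_pow hXQ
    rw [X_dvd_iff, coeff_zero_eq_eval_zero] at this
    exact hQ0 this
  -- kernel is exactly span {h^r}
  have hker_eq : RingHom.ker ψ = Ideal.span {h ^ r} := by
    set g := Submodule.IsPrincipal.generator (RingHom.ker ψ) with hgdef
    have hg : Ideal.span {g} = RingHom.ker ψ := Ideal.span_singleton_generator _
    have hmem : h ^ r ∈ RingHom.ker ψ := by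
      rw [RingHom.mem_ker]
      exact hker_le _ (Ideal.subset_span rfl)
    rw [← hg, Ideal.mem_span_singleton] at hmem
    obtain ⟨k, hk, hassoc⟩ := (dvd_prime_pow hirr.prime r).mp hmem
    rcases lt_or_eq_of_le hk with hk' | rfl
    · exfalso
      apply hnotker
      rw [← RingHom.mem_ker, ← hg, Ideal.mem_span_singleton]
      exact hassoc.dvd.trans (pow_dvd_pow h (Nat.le_sub_one_of_lt hk'))
    · rw [← hg, Ideal.span_singleton_eq_span_singleton.mpr hassoc]
  -- lift to the quotient
  set φ : AdjoinRoot (h ^ r) →+* R₂ :=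
    Ideal.Quotient.lift (Ideal.span {h ^ r}) ψ hker_le with hφ
  have hφ_mk : ∀ p : Polynomial F, φ (Ideal.Quotient.mk _ p) = ψ p := fun p =>
    Ideal.Quotient.lift_mk _ _ _
  have hinj : Function.Injective φ := by
    rw [injective_iff_map_eq_zero]
    intro a ha
    obtain ⟨p, rfl⟩ := Ideal.Quotient.mk_surjective a
    rw [hφ_mk] at ha
    rw [← RingHom.mem_ker, hker_eq] at ha
    exact Ideal.Quotient.eq_zero_iff_mem.mpr ha
  -- cardinalities
  have hhr0 : h ^ r ≠ 0 := pow_ne_zero _ hh0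
  have hXr0 : (X : Polynomial E) ^ r ≠ 0 := pow_ne_zero _ X_ne_zero
  let pb₁ := AdjoinRoot.powerBasis hhr0
  let pbE := AdjoinRoot.powerBasis hh0
  let pb₂ : PowerBasis E (AdjoinRoot ((X : Polynomial E) ^ r)) := AdjoinRoot.powerBasis hXr0
  haveI : Module.Finite F (AdjoinRoot (h ^ r)) := Module.Finite.of_basis pb₁.basis
  haveI : Module.Finite F E := Module.Finite.of_basis pbE.basis
  haveI : Finite E := Module.finite_of_finite F
  haveI : Module.Finite E (AdjoinRoot ((X : Polynomial E) ^ r)) := Module.Finite.of_basis pb₂.basis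
  haveI : Finite (AdjoinRoot (h ^ r)) := Module.finite_of_finite F
  haveI : Finite (AdjoinRoot ((X : Polynomial E) ^ r)) := Module.finite_of_finite E
  haveI : Finite R₂ := by rw [hR2]; exact (inferInstance : Finite (AdjoinRoot ((X : Polynomial E) ^ r)))
  haveI : Fintype E := Fintype.ofFinite E
  haveI : Fintype (AdjoinRoot (h ^ r)) := Fintype.ofFinite _
  haveI : Fintype (AdjoinRoot ((X : Polynomial E) ^ r)) := Fintype.ofFinite _
  have hcard : Nat.card (AdjoinRoot (h ^ r)) = Nat.card R₂ := by
    have h1 : Fintype.card (AdjoinRoot (h ^ r)) =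
        Fintype.card F ^ Module.finrank F (AdjoinRoot (h ^ r)) := Module.card_eq_pow_finrank
    have h2 : Fintype.card (AdjoinRoot ((X : Polynomial E) ^ r)) =
        Fintype.card E ^ Module.finrank E (AdjoinRoot ((X : Polynomial E) ^ r)) :=
      Module.card_eq_pow_finrank
    have h3 : Fintype.card E = Fintype.card F ^ Module.finrank F E := Module.card_eq_pow_finrank
    have e1 : Module.finrank F (AdjoinRoot (h ^ r)) = r * h.natDegree := by
      rw [pb₁.finrank, AdjoinRoot.powerBasis_dim, natDegree_pow]
    have e2 : Module.finrank E (AdjoinRoot ((X : Polynomial E) ^ r)) = r := by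
      rw [pb₂.finrank, AdjoinRoot.powerBasis_dim, natDegree_pow, natDegree_X, mul_one]
    have e3 : Module.finrank F E = h.natDegree := by
      rw [pbE.finrank, AdjoinRoot.powerBasis_dim]
    have : Nat.card R₂ = Nat.card (AdjoinRoot ((X : Polynomial E) ^ r)) := rfl
    rw [this, Nat.card_eq_fintype_card, Nat.card_eq_fintype_card, h1, h2, h3, e1, e2, e3,
      ← pow_mul, mul_comm]
  have hbij : Function.Bijective φ :=
    (Nat.bijective_iff_injective_and_card φ).mpr ⟨hinj, hcard⟩
  exact ⟨RingEquiv.ofBijective φ hbij⟩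


/-- Let `h ∈ 𝔽_q[t]` be irreducible and `E = 𝔽_q[t]/⟨h⟩`.  Then for every positive
integer `r`, the rings `𝔽_q[t]/⟨h^r⟩` and `E[u]/⟨u^r⟩` are isomorphic. -/
theorem quotient_power_ringEquiv
    (F : Type*) [Field F] [Fintype F]
    (h : Polynomial F) (hirr : Irreducible h)
    (r : ℕ) (hr : 0 < r) :
    Nonempty
      ((Polynomial F ⧸ Ideal.span {h ^ r}) ≃+*
        (@Polynomial (Polynomial F ⧸ @Ideal.span (Polynomial F) CommSemiring.toSemiring {h}) CommSemiring.toSemiring ⧸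
          Ideal.span {(X : @Polynomial (Polynomial F ⧸ @Ideal.span (Polynomial F) CommSemiring.toSemiring {h}) CommSemiring.toSemiring) ^ r})) := by
  obtain ⟨e⟩ := quotient_power_ringEquiv_aux F h hirr r hr
  exact ⟨e⟩
end

section
/- Hensel lifting of approximate roots modulo powers: Let R be a finite local principal ideal ring of length two with maximal ideal m = ⟨π⟩ and residue field k = F_q of odd characteristic. Let F(t) ∈ R[t] be monic with irreducible reduction f(t) ∈ F_q[t]. Then for every r > 0 and every z(t) ∈ F_q[t] satisfying z(t) ≡ t (mod f(t)) and f(z(t)) ≡ 0 (mod f(t)^r), there exists a lift Z(t) ∈ R[t] of z(t) such that Z(t) ≡ t (mod F(t)) and F(Z(t)) ≡ 0 (mod F(t)^r). -/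
open Polynomial IsLocalRing

/-- The kernel of reduction mod the maximal ideal squares to zero when `m ^ 2 = ⊥`. -/
private lemma ker_sq_zero {R : Type*} [CommRing R] [IsLocalRing R]
    (hm2 : (maximalIdeal R) ^ 2 = ⊥) (P Q : Polynomial R)
    (hP : P.map (residue R) = 0) (hQ : Q.map (residue R) = 0) : P * Q = 0 := by
  ext n
  rw [coeff_mul, coeff_zero]
  apply Finset.sum_eq_zero
  intro x _
  have h1 : P.coeff x.1 ∈ maximalIdeal R := by
    have := congrArg (fun q => q.coeff x.1) hP
    simpa [coeff_map, Ideal.Quotient.eq_zero_iff_mem] using this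
  have h2 : Q.coeff x.2 ∈ maximalIdeal R := by
    have := congrArg (fun q => q.coeff x.2) hQ
    simpa [coeff_map, Ideal.Quotient.eq_zero_iff_mem] using this
  have hmem : P.coeff x.1 * Q.coeff x.2 ∈ (maximalIdeal R) ^ 2 := by
    rw [pow_two]; exact Ideal.mul_mem_mul h1 h2
  rw [hm2] at hmem
  simpa using hmem

/-- Hensel lifting of approximate roots modulo powers: let `R` be a finite local
principal ideal ring of length two whose residue field has odd characteristic, and let
`F ∈ R[t]` be monic with irreducible reduction `f`.  For every `r > 0` and every
`z ∈ k[t]` with `z ≡ t (mod f)` and `f(z) ≡ 0 (mod f^r)`, there exists a lift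
`Z ∈ R[t]` of `z` with `Z ≡ t (mod F)` and `F(Z) ≡ 0 (mod F^r)`. -/
theorem hensel_lift_approximate_roots
    (R : Type*) [CommRing R] [IsLocalRing R] [Finite R]
    (hprin : (maximalIdeal R).IsPrincipal)
    (hm2 : (maximalIdeal R) ^ 2 = ⊥)
    (p : ℕ) (hp : p.Prime) (hodd : p ≠ 2) [CharP (ResidueField R) p]
    (F : Polynomial R) (hF : F.Monic)
    (hirr : Irreducible (F.map (residue R)))
    (r : ℕ) (hr : 0 < r)
    (z : Polynomial (ResidueField R))
    (hz1 : F.map (residue R) ∣ (z - X))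
    (hz2 : (F.map (residue R)) ^ r ∣ (F.map (residue R)).comp z) :
    ∃ Z : Polynomial R,
      Z.map (residue R) = z ∧ F ∣ (Z - X) ∧ F ^ r ∣ F.comp Z := by
  have hsurj : Function.Surjective
      (Polynomial.map (residue R) : Polynomial R → Polynomial (ResidueField R)) :=
    Polynomial.map_surjective _ residue_surjective
  set f : Polynomial (ResidueField R) := F.map (residue R) with hfdef
  have hfin : Finite (ResidueField R) := Finite.of_surjective _ (residue_surjective (R := R))
  -- `f` is separable, so `f` is coprime with `f'(z)`
  have hsep : f.Separable := PerfectField.separable_of_irreducible hirr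
  have hdvdz : f ∣ (derivative f).comp z - derivative f := by
    have h := sub_dvd_eval_sub z X ((derivative f).map (C : _ →+* Polynomial (ResidueField R)))
    have h2 : z - X ∣ (derivative f).comp z - (derivative f).comp X := by
      simpa [comp, eval₂_eq_eval_map] using h
    simpa using dvd_trans hz1 h2
  have hnotdvd : ¬ f ∣ (derivative f).comp z := by
    intro h
    have hfd : f ∣ derivative f := by
      have := dvd_sub h hdvdz
      simpa using this
    exact hirr.not_isUnit (hsep.isUnit_of_dvd' dvd_rfl hfd)
  have hcop : IsCoprime (f ^ (r - 1)) ((derivative f).comp z) :=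
    ((hirr.coprime_iff_not_dvd).mpr hnotdvd).pow_left
  obtain ⟨b, a, hab⟩ := hcop
  -- first approximation Z₁ = X + F * W
  obtain ⟨w, hw⟩ := hz1
  obtain ⟨W, hW⟩ := hsurj w
  set Z₁ : Polynomial R := X + F * W with hZ₁def
  have hZ₁map : Z₁.map (residue R) = z := by
    simp only [hZ₁def, Polynomial.map_add, Polynomial.map_mul, Polynomial.map_X, hW, ← hfdef,
      ← hw]
    ring
  -- F ∣ F.comp Z₁
  have hFZ₁ : F ∣ F.comp Z₁ := by
    have h := sub_dvd_eval_sub Z₁ X (F.map (C : R →+* Polynomial R))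
    have h2 : Z₁ - X ∣ F.comp Z₁ - F.comp X := by
      simpa [comp, eval₂_eq_eval_map] using h
    have h3 : F ∣ Z₁ - X := ⟨W, by rw [hZ₁def]; ring⟩
    have h4 : F ∣ F.comp Z₁ - F := by simpa using h3.trans h2
    simpa using dvd_add h4 (dvd_refl F)
  -- decompose F.comp Z₁ = F^r * Cc + F * E with E in the kernel
  obtain ⟨c, hc⟩ := hz2
  obtain ⟨Cc, hCc⟩ := hsurj c
  have hmapcomp : (F.comp Z₁).map (residue R) = f.comp z := by
    rw [Polynomial.map_comp, hZ₁map, ← hfdef]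
  set D : Polynomial R := F.comp Z₁ - F ^ r * Cc with hDdef
  have hDmap : D.map (residue R) = 0 := by
    simp only [hDdef, Polynomial.map_sub, Polynomial.map_mul, Polynomial.map_pow, hCc,
      hmapcomp, ← hfdef, ← hc, sub_self]
  have hFD : F ∣ D := by
    refine dvd_sub hFZ₁ (Dvd.dvd.mul_right ?_ Cc)
    exact dvd_pow_self F hr.ne'
  obtain ⟨E, hE⟩ := hFD
  have hEmap : E.map (residue R) = 0 := by
    have h0 : f * E.map (residue R) = 0 := by
      have := congrArg (Polynomial.map (residue R)) hE
      rw [hDmap, Polynomial.map_mul] at this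
      exact this.symm
    rcases mul_eq_zero.mp h0 with h | h
    · exact absurd h (hirr.ne_zero)
    · exact h
  -- lifts of a and b
  obtain ⟨A, hA⟩ := hsurj a
  obtain ⟨B, hB⟩ := hsurj b
  -- the correction
  refine ⟨Z₁ - F * (A * E), ?_, ?_, ?_⟩
  · rw [Polynomial.map_sub, hZ₁map, Polynomial.map_mul, Polynomial.map_mul, hEmap]
    ring
  · refine ⟨W - A * E, ?_⟩
    rw [hZ₁def]; ring
  · -- Taylor expansion
    obtain ⟨k, hk⟩ := Polynomial.binomExpansion (F.map (C : R →+* Polynomial R)) Z₁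
      (-(F * (A * E)))
    have hcompeq : F.comp (Z₁ - F * (A * E)) =
        F.comp Z₁ - (F.derivative.comp Z₁) * (F * (A * E)) := by
      have h1 : F.comp (Z₁ - F * (A * E)) = (F.map (C : R →+* Polynomial R)).eval
          (Z₁ + -(F * (A * E))) := by
        rw [comp, eval₂_eq_eval_map]; ring_nf
      have hsq : (-(F * (A * E))) ^ 2 = 0 := by
        have hAE : (A * E).map (residue R) = 0 := by
          rw [Polynomial.map_mul, hEmap, mul_zero]
        have : (A * E) * (A * E) = 0 := ker_sq_zero hm2 _ _ hAE hAE
        ring_nf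
        calc F ^ 2 * A ^ 2 * E ^ 2 = F ^ 2 * ((A * E) * (A * E)) := by ring
        _ = 0 := by rw [this, mul_zero]
      rw [h1, hk, hsq, mul_zero, add_zero]
      rw [derivative_map, ← eval₂_eq_eval_map, ← comp, ← eval₂_eq_eval_map, ← comp]
      ring
    rw [hcompeq]
    -- F.comp Z₁ = F^r * Cc + F * E
    have hFcomp : F.comp Z₁ = F ^ r * Cc + F * E := by
      rw [← hE, hDdef]; ring
    -- N := 1 - (A * F'.comp Z₁) - B * F^(r-1) is in the kernel
    set N : Polynomial R := 1 - A * (F.derivative.comp Z₁) - B * F ^ (r - 1) with hNdef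
    have hNmap : N.map (residue R) = 0 := by
      have hder : (F.derivative.comp Z₁).map (residue R) = (derivative f).comp z := by
        rw [Polynomial.map_comp, derivative_map, hZ₁map]
      simp only [hNdef, Polynomial.map_sub, Polynomial.map_one, Polynomial.map_mul,
        Polynomial.map_pow, hA, hB, hder, ← hfdef]
      rw [sub_sub, ← hab]
      ring_nf
    have hEN : E * N = 0 := ker_sq_zero hm2 _ _ hEmap hNmap
    -- final computation
    have key : F.comp Z₁ - (F.derivative.comp Z₁) * (F * (A * E)) =
        F ^ r * Cc + F * (E * B * F ^ (r - 1)) + F * (E * N) := by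
      rw [hFcomp, hNdef]; ring
    rw [key, hEN, mul_zero, add_zero]
    have hpow : F * F ^ (r - 1) = F ^ r := by
      rw [← pow_succ']
      congr 1
      omega
    refine dvd_add (Dvd.intro _ rfl) ?_
    refine ⟨E * B, ?_⟩
    calc F * (E * B * F ^ (r - 1)) = (F * F ^ (r - 1)) * (E * B) := by ring
    _ = F ^ r * (E * B) := by rw [hpow]
end
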